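/- arXiv:2212.10061 — 4 statements merged into one kernel-verified Lean document; each statement's English description precedes it below -/
import Mathlib

section
/- Let A be a positive semidefinite Hermitian matrix whose nonzero spectrum lies in [λ_min, λ_max] with λ_min > 0. For each integer m ≥ 1 there exists a polynomial P_m of degree m with P_m(0) = 0 such that |√z − P_m(z)| ≤ √λ_max · e^{−m·λ_min/λ_max} for all z ∈ {0} ∪ [λ_min, λ_max]; consequently ‖√A − P_m(A)‖ ≤ √λ_max · e^{−m·λ_min/λ_max} in operator norm. -/
/-!
The Taylor coefficients `cₙ` of `(1 - x)^(-1/2)` lie in `[0, 1]`, so for `0 ≤ x < 1` the tail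
`∑_{n ≥ m} cₙ xⁿ` lies between `0` and `∑_{n ≥ m} xⁿ = xᵐ / (1 - x)`. Multiplying by `1 - x` gives
`0 ≤ √(1 - x) - (1 - x) ∑_{n < m} cₙ xⁿ ≤ xᵐ`, and the substitution `z = L (1 - x)` turns this into
`|√z - P_m(z)| ≤ √L (1 - z/L)ᵐ ≤ √L e^{-m z / L}`. For the matrix, `√A - P_m(A)` is the continuous
functional calculus of `√· - P_m` at `A`, whose operator norm is the maximum of `|√· - P_m|` over the
eigenvalues.
-/

open Matrix
open scoped ComplexOrder

/-- Real power of a matrix via the spectral decomposition (junk value `0` if not Hermitian). -/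
noncomputable def mpow {N : ℕ} (M : Matrix (Fin N) (Fin N) ℂ) (r : ℝ) :
    Matrix (Fin N) (Fin N) ℂ :=
  if h : M.IsHermitian then
    (h.eigenvectorUnitary : Matrix (Fin N) (Fin N) ℂ) *
      Matrix.diagonal (fun i => ((h.eigenvalues i ^ r : ℝ) : ℂ)) *
      (star (h.eigenvectorUnitary : Matrix (Fin N) (Fin N) ℂ))
  else 0

open Polynomial Finset

theorem ascPochhammer_eval_le_eval {S : Type*} [CommSemiring S] [PartialOrder S]
    [IsStrictOrderedRing S] (n : ℕ) {s t : S} (hs : 0 < s) (hst : s ≤ t) :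
    (ascPochhammer S n).eval s ≤ (ascPochhammer S n).eval t := by
  induction n with
  | zero => simp
  | succ n ih =>
    simp only [ascPochhammer_succ_eval]
    exact mul_le_mul ih (by gcongr) (by positivity) ((ascPochhammer_pos n s hs).le.trans ih)

/-- The `n`-th Taylor coefficient of `(1 - x)^(-1/2)`, i.e. the paper's `binom(2n, n) / 4ⁿ`. -/
noncomputable def invSqrtCoeff (n : ℕ) : ℝ :=
  Ring.choose ((1 / 2 : ℝ) + n - 1) n

theorem factorial_mul_invSqrtCoeff (n : ℕ) :
    (n.factorial : ℝ) * invSqrtCoeff n = (ascPochhammer ℝ n).eval (1 / 2) := by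
  rw [invSqrtCoeff, ← Ring.multichoose_eq, ← ascPochhammer_smeval_eq_eval,
    ← Ring.factorial_nsmul_multichoose_eq_ascPochhammer, nsmul_eq_mul]

theorem invSqrtCoeff_nonneg (n : ℕ) : 0 ≤ invSqrtCoeff n := by
  refine (mul_nonneg_iff_of_pos_left (by positivity : (0 : ℝ) < n.factorial)).mp ?_
  rw [factorial_mul_invSqrtCoeff]
  exact (ascPochhammer_pos n _ (by norm_num)).le

theorem invSqrtCoeff_le_one (n : ℕ) : invSqrtCoeff n ≤ 1 := by
  have h : (n.factorial : ℝ) * invSqrtCoeff n ≤ n.factorial * 1 := by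
    rw [factorial_mul_invSqrtCoeff, mul_one, ← ascPochhammer_eval_one]
    exact ascPochhammer_eval_le_eval n (by norm_num) (by norm_num)
  exact le_of_mul_le_mul_left h (by positivity)

theorem hasSum_invSqrtCoeff_mul_pow {x : ℝ} (hx : |x| < 1) :
    HasSum (fun n ↦ invSqrtCoeff n * x ^ n) (1 / √(1 - x)) := by
  have h := (Real.one_div_one_sub_rpow_hasFPowerSeriesOnBall_zero (1 / 2)).hasSum
    (y := x) (by simpa [Metric.eball, edist_dist, Real.dist_eq] using hx)
  simpa only [FormalMultilinearSeries.ofScalars_apply_eq, smul_eq_mul, zero_add,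
    ← Real.sqrt_eq_rpow, invSqrtCoeff] using h

theorem abs_sqrt_one_sub_sub_mul_sum_le {x : ℝ} (hx0 : 0 ≤ x) (hx1 : x < 1) (m : ℕ) :
    |√(1 - x) - (1 - x) * ∑ n ∈ range m, invSqrtCoeff n * x ^ n| ≤ x ^ m := by
  set S := ∑ n ∈ range m, invSqrtCoeff n * x ^ n
  have h1x : 0 < 1 - x := by linarith
  have htail : HasSum (fun n ↦ invSqrtCoeff (n + m) * x ^ (n + m)) (1 / √(1 - x) - S) :=
    (hasSum_nat_add_iff' m).mpr (hasSum_invSqrtCoeff_mul_pow (abs_lt.mpr ⟨by linarith, hx1⟩))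
  have hgeom : HasSum (fun n ↦ x ^ (n + m)) (x ^ m / (1 - x)) := by
    simpa only [pow_add, mul_comm, div_eq_mul_inv] using
      (hasSum_geometric_of_lt_one hx0 hx1).mul_left (x ^ m)
  have htail_nonneg : 0 ≤ 1 / √(1 - x) - S :=
    htail.nonneg fun n ↦ mul_nonneg (invSqrtCoeff_nonneg _) (pow_nonneg hx0 _)
  have htail_le : 1 / √(1 - x) - S ≤ x ^ m / (1 - x) :=
    hasSum_le (fun n ↦ mul_le_of_le_one_left (pow_nonneg hx0 _) (invSqrtCoeff_le_one _))
      htail hgeom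
  have hsqrt : √(1 - x) = (1 - x) * (1 / √(1 - x)) := by
    field_simp
    exact Real.sq_sqrt h1x.le
  rw [hsqrt, ← mul_sub, abs_of_nonneg (mul_nonneg h1x.le htail_nonneg)]
  calc (1 - x) * (1 / √(1 - x) - S) ≤ (1 - x) * (x ^ m / (1 - x)) := by gcongr
    _ = x ^ m := by field_simp

/-- The paper's `P_m`: `z` times the degree-`(m-1)` Taylor polynomial of `1/√z` at `z = L`. -/
noncomputable def sqrtApprox (L : ℝ) (m : ℕ) : ℝ[X] :=
  ∑ n ∈ range m, C (invSqrtCoeff n / √L) * X * (1 - C L⁻¹ * X) ^ n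

theorem natDegree_sqrtApprox_le (L : ℝ) (m : ℕ) : (sqrtApprox L m).natDegree ≤ m := by
  refine natDegree_sum_le_of_forall_le _ _ fun n hn ↦ ?_
  have hlin : (1 - C L⁻¹ * X).natDegree ≤ 1 := by compute_degree
  calc (C (invSqrtCoeff n / √L) * X * (1 - C L⁻¹ * X) ^ n).natDegree
      ≤ 1 + n * 1 := by
        refine natDegree_mul_le_of_le ?_ (natDegree_pow_le_of_le n hlin)
        compute_degree
    _ ≤ m := by have := mem_range.mp hn; omega

theorem eval_sqrtApprox (L : ℝ) (m : ℕ) (z : ℝ) :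
    (sqrtApprox L m).eval z = √L * (z / L) * ∑ n ∈ range m, invSqrtCoeff n * (1 - z / L) ^ n := by
  have h : √L / L = 1 / √L := Real.sqrt_div_self'
  simp only [sqrtApprox, eval_finsetSum, eval_mul, eval_pow, eval_sub, eval_one, eval_C, eval_X,
    mul_sum]
  refine sum_congr rfl fun n _ ↦ ?_
  rw [div_eq_mul_one_div (invSqrtCoeff n), ← h]
  ring

theorem abs_sqrt_sub_eval_sqrtApprox_le {L z : ℝ} (hz : 0 < z) (hzL : z ≤ L) (m : ℕ) :
    |√z - (sqrtApprox L m).eval z| ≤ √L * (1 - z / L) ^ m := by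
  have hL : 0 < L := hz.trans_le hzL
  have hx0 : 0 ≤ 1 - z / L := by rw [sub_nonneg, div_le_one hL]; exact hzL
  have hx1 : 1 - z / L < 1 := by linarith [div_pos hz hL]
  have h := abs_sqrt_one_sub_sub_mul_sum_le hx0 hx1 m
  rw [sub_sub_cancel] at h
  have hsqrt : √z = √L * √(z / L) := by
    rw [← Real.sqrt_mul hL.le, mul_div_cancel₀ _ hL.ne']
  rw [hsqrt, eval_sqrtApprox, mul_assoc, ← mul_sub, abs_mul, abs_of_nonneg (Real.sqrt_nonneg _)]
  gcongr

theorem abs_sqrt_sub_eval_sqrtApprox_le_exp {lmin lmax z : ℝ} (hmin : 0 < lmin)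
    (hz : z = 0 ∨ z ∈ Set.Icc lmin lmax) (m : ℕ) :
    |√z - (sqrtApprox lmax m).eval z| ≤ √lmax * Real.exp (-(m : ℝ) * lmin / lmax) := by
  obtain rfl | ⟨hz₁, hz₂⟩ := hz
  · simp only [eval_sqrtApprox, zero_div, mul_zero, zero_mul, Real.sqrt_zero, sub_zero,
      abs_zero]
    positivity
  have hmax : 0 < lmax := hmin.trans_le (hz₁.trans hz₂)
  refine (abs_sqrt_sub_eval_sqrtApprox_le (hmin.trans_le hz₁) hz₂ m).trans ?_
  have hx0 : 0 ≤ 1 - z / lmax := by rw [sub_nonneg, div_le_one hmax]; exact hz₂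
  have hx : 1 - z / lmax ≤ Real.exp (-(lmin / lmax)) := by
    have := Real.add_one_le_exp (-(lmin / lmax))
    have : lmin / lmax ≤ z / lmax := by gcongr
    linarith
  calc √lmax * (1 - z / lmax) ^ m ≤ √lmax * Real.exp (-(lmin / lmax)) ^ m := by gcongr
    _ = √lmax * Real.exp (-(m : ℝ) * lmin / lmax) := by rw [← Real.exp_nat_mul]; ring_nf

theorem mpow_half_eq_cfc {N : ℕ} {A : Matrix (Fin N) (Fin N) ℂ} (hA : A.IsHermitian) :
    mpow A (1 / 2) = cfc Real.sqrt A := by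
  rw [mpow, dif_pos hA, hA.cfc_eq, IsHermitian.cfc, Unitary.conjStarAlgAut_apply]
  simp only [Function.comp_def, Real.sqrt_eq_rpow]
  rfl

open scoped Matrix.Norms.L2Operator in
theorem norm_toEuclideanCLM_cfc_le {n : Type*} [Fintype n] [DecidableEq n]
    {A : Matrix n n ℂ} (hA : A.IsHermitian) {f : ℝ → ℝ} {c : ℝ} (hc : 0 ≤ c)
    (hf : ∀ i, |f (hA.eigenvalues i)| ≤ c) : ‖toEuclideanCLM (𝕜 := ℂ) (cfc f A)‖ ≤ c := by
  refine norm_cfc_le (𝕜 := ℝ) (a := A) hc fun x hx ↦ ?_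
  obtain ⟨i, rfl⟩ := hA.spectrum_real_eq_range_eigenvalues ▸ hx
  exact hf i

theorem stmt_14_general {N : ℕ} (A : Matrix (Fin N) (Fin N) ℂ) (hA : A.PosSemidef)
    (lmin lmax : ℝ) (hmin : 0 < lmin)
    (hspec : ∀ i, hA.1.eigenvalues i = 0 ∨ hA.1.eigenvalues i ∈ Set.Icc lmin lmax)
    (m : ℕ) :
    ∃ P : Polynomial ℝ, P.natDegree ≤ m ∧ P.eval 0 = 0 ∧
      (∀ z : ℝ, (z = 0 ∨ z ∈ Set.Icc lmin lmax) →
        |Real.sqrt z - P.eval z| ≤ Real.sqrt lmax * Real.exp (-(m : ℝ) * lmin / lmax)) ∧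
      ‖Matrix.toEuclideanCLM (𝕜 := ℂ)
          (mpow A (1/2) - Polynomial.aeval A (P.map (algebraMap ℝ ℂ)))‖ ≤
        Real.sqrt lmax * Real.exp (-(m : ℝ) * lmin / lmax) := by
  have hbound (z : ℝ) (hz : z = 0 ∨ z ∈ Set.Icc lmin lmax) :=
    abs_sqrt_sub_eval_sqrtApprox_le_exp hmin hz m
  refine ⟨sqrtApprox lmax m, natDegree_sqrtApprox_le lmax m, by simp [eval_sqrtApprox], hbound, ?_⟩
  have hfin := A.finite_real_spectrum
  rw [mpow_half_eq_cfc hA.1, aeval_map_algebraMap, ← cfc_polynomial _ A hA.1.isSelfAdjoint,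
    ← cfc_sub _ _ A (hfin.continuousOn _) (hfin.continuousOn _)]
  exact norm_toEuclideanCLM_cfc_le hA.1 (by positivity) fun i ↦ hbound _ (hspec i)

/-- Polynomial approximation of the matrix square root: if the nonzero spectrum of a
PSD matrix `A` lies in `[λmin, λmax]`, then for each `m ≥ 1` there is a degree-`m`
polynomial `P` with `P(0) = 0` approximating `√z` up to `√λmax · e^{-m·λmin/λmax}`
on `{0} ∪ [λmin, λmax]`, and hence `‖√A − P(A)‖ ≤ √λmax · e^{-m·λmin/λmax}` in
operator norm. -/
theorem stmt_14 {N : ℕ} (A : Matrix (Fin N) (Fin N) ℂ) (hA : A.PosSemidef)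
    (lmin lmax : ℝ) (hmin : 0 < lmin) (hle : lmin ≤ lmax)
    (hspec : ∀ i, hA.1.eigenvalues i = 0 ∨ hA.1.eigenvalues i ∈ Set.Icc lmin lmax)
    (m : ℕ) (hm : 1 ≤ m) :
    ∃ P : Polynomial ℝ, P.natDegree ≤ m ∧ P.eval 0 = 0 ∧
      (∀ z : ℝ, (z = 0 ∨ z ∈ Set.Icc lmin lmax) →
        |Real.sqrt z - P.eval z| ≤ Real.sqrt lmax * Real.exp (-(m : ℝ) * lmin / lmax)) ∧
      ‖Matrix.toEuclideanCLM (𝕜 := ℂ)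
          (mpow A (1/2) - Polynomial.aeval A (P.map (algebraMap ℝ ℂ)))‖ ≤
        Real.sqrt lmax * Real.exp (-(m : ℝ) * lmin / lmax) :=
  stmt_14_general A hA lmin lmax hmin hspec m
end

section
/- Let H = Σ_{e∈E} P_e be a frustration-free Hamiltonian on a δ-regular graph G = (V,E), where each P_e is an orthogonal projector. Let γ_loc = min over pairs of intersecting edges e ≠ e' of the spectral gap of P_e + P_{e'}. Then H² ≥ 2(δ−1)·(γ_loc − (1 − 1/(2(δ−1))))·H, and hence the spectral gap of H is at least 2(δ−1)·(γ_loc − (1 − 1/(2(δ−1)))). -/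
open Matrix
open scoped ComplexOrder

/-- The spectral gap of a Hermitian matrix: the infimum of its nonzero eigenvalues
(junk value `0` if not Hermitian or if there are no nonzero eigenvalues). -/
noncomputable def specGap {n : Type*} [Fintype n] [DecidableEq n]
    (M : Matrix n n ℂ) : ℝ :=
  if h : M.IsHermitian then sInf {x : ℝ | (∃ i, h.eigenvalues i = x) ∧ x ≠ 0} else 0

/-!
Expand `H² = Σ_e P_e + Σ_{e ∼ e'} P_e P_{e'} + Σ_{e ∩ e' = ∅} P_e P_{e'}`, the middle sum running
over ordered pairs of distinct edges sharing a vertex. The last sum is positive semidefinite, since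
a product of commuting projectors is a projector. Summing the local bounds
`(P_e + P_{e'})² ≥ γ_loc (P_e + P_{e'})` over the ordered pairs `e ∼ e'`, each edge having exactly
`k = 2(δ - 1)` neighbours, gives `2kH + 2 Σ_{e ∼ e'} P_e P_{e'} ≥ 2kγ_loc H`, hence
`H² ≥ cH` with `c = k(γ_loc - 1) + 1`. At an eigenvalue `λ > 0` of `H` this reads `λ² ≥ cλ`;
if `H = 0`, every `P_e` vanishes, so `γ_loc ≤ 0` and the bound is negative.
-/

open scoped MatrixOrder
open Finset

section SpectralGap

variable {n : Type*} [Fintype n] [DecidableEq n] {M : Matrix n n ℂ}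

theorem Matrix.IsHermitian.posSemidef_mul_self_sub_smul_iff (hM : M.IsHermitian) (c : ℝ) :
    (M * M - (c : ℂ) • M).PosSemidef ↔
      ∀ i, c * hM.eigenvalues i ≤ hM.eigenvalues i ^ 2 := by
  have hsa : IsSelfAdjoint M := hM
  have hcfc : M * M - (c : ℂ) • M = cfc (fun x : ℝ => x ^ 2 - c * x) M := by
    rw [cfc_sub _ _ M, cfc_pow_id M 2, cfc_const_mul_id c M, sq, Complex.coe_smul]
  rw [hcfc, ← nonneg_iff_posSemidef, cfc_nonneg_iff _ M, hM.spectrum_real_eq_range_eigenvalues]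
  simp [sub_nonneg]

theorem specGap_zero : specGap (0 : Matrix n n ℂ) = 0 := by
  have h0 : (isHermitian_zero (n := n) (α := ℂ)).eigenvalues = 0 :=
    isHermitian_zero.eigenvalues_eq_zero_iff.2 rfl
  rw [specGap, dif_pos isHermitian_zero, h0]
  convert Real.sInf_empty
  ext x
  simp only [Pi.zero_apply, Set.mem_ofPred_eq, Set.mem_empty_iff_false, iff_false]
  rintro ⟨⟨-, rfl⟩, h⟩
  exact h rfl

theorem Matrix.PosSemidef.specGap_nonneg (hM : M.PosSemidef) : 0 ≤ specGap M := by
  rw [specGap, dif_pos hM.1]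
  refine Real.sInf_nonneg ?_
  rintro _ ⟨⟨i, rfl⟩, -⟩
  exact hM.eigenvalues_nonneg i

theorem Matrix.PosSemidef.specGap_le_eigenvalue (hM : M.PosSemidef) {i : n}
    (hi : hM.1.eigenvalues i ≠ 0) : specGap M ≤ hM.1.eigenvalues i := by
  rw [specGap, dif_pos hM.1]
  refine csInf_le ⟨0, ?_⟩ ⟨⟨i, rfl⟩, hi⟩
  rintro _ ⟨⟨j, rfl⟩, -⟩
  exact hM.eigenvalues_nonneg j

theorem Matrix.PosSemidef.posSemidef_mul_self_sub_smul_of_le_specGap (hM : M.PosSemidef)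
    {γ : ℝ} (hγ : γ ≤ specGap M) : (M * M - (γ : ℂ) • M).PosSemidef := by
  refine (hM.1.posSemidef_mul_self_sub_smul_iff γ).2 fun i => ?_
  rcases (hM.eigenvalues_nonneg i).eq_or_lt with h0 | hpos
  · simp [← h0]
  · nlinarith [hM.specGap_le_eigenvalue hpos.ne']

theorem Matrix.PosSemidef.le_specGap_of_posSemidef_mul_self_sub_smul (hM : M.PosSemidef)
    (hM0 : M ≠ 0) {c : ℝ} (h : (M * M - (c : ℂ) • M).PosSemidef) : c ≤ specGap M := by
  have hquad := (hM.1.posSemidef_mul_self_sub_smul_iff c).1 h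
  obtain ⟨i, hi⟩ : ∃ i, hM.1.eigenvalues i ≠ 0 := by
    by_contra! h0
    exact hM0 (hM.1.eigenvalues_eq_zero_iff.1 (funext h0))
  rw [specGap, dif_pos hM.1]
  refine le_csInf ⟨_, ⟨i, rfl⟩, hi⟩ ?_
  rintro _ ⟨⟨j, rfl⟩, hj⟩
  nlinarith [hquad j, (hM.eigenvalues_nonneg j).lt_of_ne' hj]

end SpectralGap

namespace SimpleGraph

variable {ι : Type*} (L : SimpleGraph ι) [DecidableRel L.Adj] (E : Finset ι)

theorem sum_sum_adj_comm {M : Type*} [AddCommMonoid M] (f : ι → ι → M) :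
    ∑ e ∈ E, ∑ e' ∈ E with L.Adj e e', f e e' = ∑ e ∈ E, ∑ e' ∈ E with L.Adj e e', f e' e :=
  Finset.sum_comm' fun e e' => by simp only [mem_filter, L.adj_comm e e']; tauto

theorem sum_sum_adj_eq_smul_sum {M : Type*} [AddCommMonoid M] {k : ℕ}
    (hk : ∀ e ∈ E, #{e' ∈ E | L.Adj e e'} = k) (f : ι → M) :
    ∑ e ∈ E, ∑ e' ∈ E with L.Adj e e', f e = k • ∑ e ∈ E, f e := by
  rw [smul_sum]
  exact sum_congr rfl fun e he => by rw [sum_const, hk e he]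

theorem sum_eq_add_sum_adj_add_sum_not_adj [DecidableEq ι] {M : Type*} [AddCommMonoid M]
    {e : ι} (he : e ∈ E) (f : ι → M) :
    ∑ e' ∈ E, f e' =
      f e + ∑ e' ∈ E with L.Adj e e', f e' + ∑ e' ∈ E.erase e with ¬ L.Adj e e', f e' := by
  have hadj : {e' ∈ E.erase e | L.Adj e e'} = {e' ∈ E | L.Adj e e'} := by
    rw [filter_erase, erase_eq_of_notMem (by simp)]
  rw [← add_sum_erase E f he, ← sum_filter_add_sum_filter_not (E.erase e) (L.Adj e), hadj,
    add_assoc]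

theorem sum_mul_sum_eq_add_sum_adj_add_sum_not_adj [DecidableEq ι] {R : Type*}
    [NonUnitalNonAssocSemiring R] (p : ι → R) :
    (∑ e ∈ E, p e) * ∑ e ∈ E, p e =
      ∑ e ∈ E, p e * p e + ∑ e ∈ E, ∑ e' ∈ E with L.Adj e e', p e * p e'
        + ∑ e ∈ E, ∑ e' ∈ E.erase e with ¬ L.Adj e e', p e * p e' := by
  rw [sum_mul_sum, ← sum_add_distrib, ← sum_add_distrib]
  exact sum_congr rfl fun e he => L.sum_eq_add_sum_adj_add_sum_not_adj E he _

theorem sum_sum_adj_add {M : Type*} [AddCommMonoid M] {k : ℕ}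
    (hk : ∀ e ∈ E, #{e' ∈ E | L.Adj e e'} = k) (f : ι → M) :
    ∑ e ∈ E, ∑ e' ∈ E with L.Adj e e', (f e + f e') = 2 • k • ∑ e ∈ E, f e := by
  rw [two_nsmul, ← L.sum_sum_adj_eq_smul_sum E hk f]
  simp only [sum_add_distrib]
  rw [L.sum_sum_adj_comm E fun e _ => f e]

theorem sum_sum_adj_add_mul_self {R : Type*} [NonUnitalNonAssocSemiring R] {k : ℕ}
    (hk : ∀ e ∈ E, #{e' ∈ E | L.Adj e e'} = k) {p : ι → R}
    (hp : ∀ e ∈ E, IsIdempotentElem (p e)) :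
    ∑ e ∈ E, ∑ e' ∈ E with L.Adj e e', (p e + p e') * (p e + p e') =
      2 • k • ∑ e ∈ E, p e + 2 • ∑ e ∈ E, ∑ e' ∈ E with L.Adj e e', p e * p e' := by
  have hexpand : ∀ e ∈ E, ∀ e' ∈ {e' ∈ E | L.Adj e e'}, (p e + p e') * (p e + p e') =
      (p e + p e') + (p e * p e' + p e' * p e) := fun e he e' he' => by
    rw [add_mul, mul_add, mul_add, (hp e he).eq, (hp e' (mem_filter.1 he').1).eq]
    abel
  rw [sum_congr rfl fun e he => sum_congr rfl (hexpand e he), ← L.sum_sum_adj_add E hk]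
  simp only [sum_add_distrib]
  rw [L.sum_sum_adj_comm E fun e e' => p e' * p e, two_nsmul]

end SimpleGraph

theorem Matrix.posSemidef_sum_mul_sum_sub_smul_sum {ι n : Type*} [Fintype n] [DecidableEq n]
    [DecidableEq ι] (L : SimpleGraph ι) [DecidableRel L.Adj] (E : Finset ι) {k : ℕ}
    (hk : ∀ e ∈ E, #{e' ∈ E | L.Adj e e'} = k) {P : ι → Matrix n n ℂ}
    (hP : ∀ e ∈ E, IsStarProjection (P e))
    (hcomm : ∀ e ∈ E, ∀ e' ∈ E.erase e, ¬ L.Adj e e' → Commute (P e) (P e'))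
    {γ : ℝ} (hγ : ∀ e ∈ E, ∀ e' ∈ E, L.Adj e e' → γ ≤ specGap (P e + P e')) :
    ((∑ e ∈ E, P e) * ∑ e ∈ E, P e - ((k * (γ - 1) + 1 : ℝ) : ℂ) • ∑ e ∈ E, P e).PosSemidef := by
  set H := ∑ e ∈ E, P e
  set S := ∑ e ∈ E, ∑ e' ∈ E with L.Adj e e', P e * P e'
  set T := ∑ e ∈ E, ∑ e' ∈ E.erase e with ¬ L.Adj e e', P e * P e'
  set W := ∑ e ∈ E, ∑ e' ∈ E with L.Adj e e',
    ((P e + P e') * (P e + P e') - (γ : ℂ) • (P e + P e'))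
  have hHH : H * H = H + S + T := by
    rw [L.sum_mul_sum_eq_add_sum_adj_add_sum_not_adj,
      sum_congr rfl fun e he => (hP e he).isIdempotentElem.eq]
  have hWeq : W = 2 • k • H + 2 • S - (γ : ℂ) • 2 • k • H := by
    simp only [W, sum_sub_distrib, ← smul_sum]
    rw [L.sum_sum_adj_add_mul_self E hk fun e he => (hP e he).isIdempotentElem,
      L.sum_sum_adj_add E hk]
  have hT : T.PosSemidef := posSemidef_sum _ fun e he => posSemidef_sum _ fun e' he' =>
    have he'E := mem_of_mem_erase (mem_filter.1 he').1
    ((hP e he).mul (hP e' he'E) (hcomm e he e' (mem_filter.1 he').1 (mem_filter.1 he').2)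
      ).nonneg.posSemidef
  have hW : W.PosSemidef := posSemidef_sum _ fun e he => posSemidef_sum _ fun e' he' =>
    have he'E := (mem_filter.1 he').1
    ((hP e he).nonneg.posSemidef.add (hP e' he'E).nonneg.posSemidef
      ).posSemidef_mul_self_sub_smul_of_le_specGap (hγ e he e' he'E (mem_filter.1 he').2)
  have hkey : H * H - ((k * (γ - 1) + 1 : ℝ) : ℂ) • H = T + (1 / 2 : ℝ) • W := by
    rw [hHH, hWeq]
    push_cast
    module
  rw [hkey]
  exact hT.add (hW.smul (by norm_num))

/-- On the edges of a graph this is its line graph. -/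
def Sym2.overlapGraph (V : Type*) : SimpleGraph (Sym2 V) where
  Adj e e' := e ≠ e' ∧ ∃ v, v ∈ e ∧ v ∈ e'
  symm := ⟨fun _ _ ⟨hne, v, h, h'⟩ => ⟨hne.symm, v, h', h⟩⟩
  loopless := ⟨fun _ h => h.1 rfl⟩

namespace SimpleGraph

variable {V : Type*} [Fintype V] [DecidableEq V] {G : SimpleGraph V} [DecidableRel G.Adj]
  [DecidableRel (Sym2.overlapGraph V).Adj]

theorem filter_overlapGraph_adj_eq (u v : V) :
    {e ∈ G.edgeFinset | (Sym2.overlapGraph V).Adj s(u, v) e} =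
      (G.incidenceFinset u ∪ G.incidenceFinset v).erase s(u, v) := by
  ext e
  simp only [Sym2.overlapGraph, mem_filter, mem_erase, mem_union, mem_incidenceFinset,
    incidenceSet, Set.mem_ofPred_eq, mem_edgeFinset, Sym2.mem_iff, exists_eq_or_imp,
    exists_eq_left]
  rw [ne_comm]
  tauto

theorem IsRegularOfDegree.card_overlapGraph_adj {δ : ℕ} (hreg : G.IsRegularOfDegree δ)
    {e : Sym2 V} (he : e ∈ G.edgeFinset) :
    #{e' ∈ G.edgeFinset | (Sym2.overlapGraph V).Adj e e'} = 2 * δ - 2 := by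
  induction e using Sym2.ind with | _ u v => ?_
  have huv : G.Adj u v := mem_edgeFinset.1 he
  have hinter : G.incidenceFinset u ∩ G.incidenceFinset v = {s(u, v)} := by
    simpa [← coe_inj] using G.incidenceSet_inter_incidenceSet_of_adj huv
  have hunion := card_union_add_card_inter (G.incidenceFinset u) (G.incidenceFinset v)
  rw [hinter, card_singleton, card_incidenceFinset_eq_degree, card_incidenceFinset_eq_degree,
    hreg u, hreg v] at hunion
  rw [filter_overlapGraph_adj_eq u v, card_erase_of_mem (mem_union_left _ ?_)]
  · omega
  · exact (G.mem_incidenceFinset _ _).2 (G.mk'_mem_incidenceSet_left_iff.2 huv)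

end SimpleGraph

theorem stmt_15_general {V : Type*} [Fintype V] [DecidableEq V]
    (G : SimpleGraph V) [DecidableRel G.Adj]
    (δ : ℕ) (hδ : 2 ≤ δ) (hreg : G.IsRegularOfDegree δ)
    {N : ℕ} (P : Sym2 V → Matrix (Fin N) (Fin N) ℂ)
    (hproj : ∀ e ∈ G.edgeFinset, (P e).IsHermitian ∧ P e * P e = P e)
    (hcomm : ∀ e ∈ G.edgeFinset, ∀ e' ∈ G.edgeFinset,
      (¬ ∃ v : V, v ∈ e ∧ v ∈ e') → P e * P e' = P e' * P e)
    (H : Matrix (Fin N) (Fin N) ℂ) (hH : H = ∑ e ∈ G.edgeFinset, P e)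
    (γloc : ℝ)
    (hγ : γloc = sInf {g : ℝ | ∃ e ∈ G.edgeFinset, ∃ e' ∈ G.edgeFinset,
      e ≠ e' ∧ (∃ v : V, v ∈ e ∧ v ∈ e') ∧ g = specGap (P e + P e')}) :
    (H * H - ((2 * ((δ : ℝ) - 1) * (γloc - (1 - 1 / (2 * ((δ : ℝ) - 1)))) : ℝ) : ℂ) • H).PosSemidef ∧
    2 * ((δ : ℝ) - 1) * (γloc - (1 - 1 / (2 * ((δ : ℝ) - 1)))) ≤ specGap H := by
  classical
  set Γ := {g : ℝ | ∃ e ∈ G.edgeFinset, ∃ e' ∈ G.edgeFinset,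
    e ≠ e' ∧ (∃ v : V, v ∈ e ∧ v ∈ e') ∧ g = specGap (P e + P e')}
  set c := 2 * ((δ : ℝ) - 1) * (γloc - (1 - 1 / (2 * ((δ : ℝ) - 1)))) with hc_def
  have hδ' : (2 : ℝ) ≤ δ := by exact_mod_cast hδ
  have hc : c = ((2 * δ - 2 : ℕ) : ℝ) * (γloc - 1) + 1 := by
    have : (δ : ℝ) - 1 ≠ 0 := by linarith
    rw [hc_def, Nat.cast_sub (by omega)]
    push_cast
    field_simp
    ring
  have hP : ∀ e ∈ G.edgeFinset, IsStarProjection (P e) :=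
    fun e he => ⟨(hproj e he).2, (hproj e he).1⟩
  have hΓ : BddBelow Γ := ⟨0, by
    rintro _ ⟨e, he, e', he', -, -, rfl⟩
    exact ((hP e he).nonneg.posSemidef.add (hP e' he').nonneg.posSemidef).specGap_nonneg⟩
  have hsq : (H * H - (c : ℂ) • H).PosSemidef := by
    rw [hc, hH]
    refine posSemidef_sum_mul_sum_sub_smul_sum (Sym2.overlapGraph V) G.edgeFinset
      (fun e he => hreg.card_overlapGraph_adj he) hP (fun e he e' he' hadj => ?_)
      fun e he e' he' ⟨hne, hmeet⟩ => hγ ▸ csInf_le hΓ ⟨e, he, e', he', hne, hmeet, rfl⟩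
    exact hcomm e he e' (mem_of_mem_erase he') fun h => hadj ⟨(ne_of_mem_erase he').symm, h⟩
  refine ⟨hsq, ?_⟩
  by_cases hH0 : H = 0
  · have hP0 : ∀ e ∈ G.edgeFinset, P e = 0 := by
      rw [← sum_eq_zero_iff_of_nonneg fun e he => (hP e he).nonneg, ← hH, hH0]
    have hγ0 : γloc ≤ 0 := hγ ▸ Real.sInf_nonpos (by
      rintro _ ⟨e, he, e', he', -, -, rfl⟩
      rw [hP0 e he, hP0 e' he', add_zero, specGap_zero])
    rw [hH0, specGap_zero, hc, Nat.cast_sub (by omega)]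
    push_cast
    nlinarith
  · have hHpsd : H.PosSemidef := hH ▸ posSemidef_sum _ fun e he => (hP e he).nonneg.posSemidef
    exact hHpsd.le_specGap_of_posSemidef_mul_self_sub_smul hH0 hsq

/-- Knabe's finite-size criterion: for a frustration-free Hamiltonian `H = Σ_e P_e`
of commuting-when-disjoint edge projectors on a `δ`-regular graph, with local gap
`γ_loc` over intersecting edge pairs, one has `H² ≥ 2(δ−1)(γ_loc − (1 − 1/(2(δ−1))))·H`
and the spectral gap of `H` is at least `2(δ−1)(γ_loc − (1 − 1/(2(δ−1))))`. -/
theorem stmt_15 {V : Type*} [Fintype V] [DecidableEq V]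
    (G : SimpleGraph V) [DecidableRel G.Adj]
    (δ : ℕ) (hδ : 2 ≤ δ) (hreg : G.IsRegularOfDegree δ)
    {N : ℕ} (P : Sym2 V → Matrix (Fin N) (Fin N) ℂ)
    (hproj : ∀ e ∈ G.edgeFinset, (P e).IsHermitian ∧ P e * P e = P e)
    (hcomm : ∀ e ∈ G.edgeFinset, ∀ e' ∈ G.edgeFinset,
      (¬ ∃ v : V, v ∈ e ∧ v ∈ e') → P e * P e' = P e' * P e)
    (H : Matrix (Fin N) (Fin N) ℂ) (hH : H = ∑ e ∈ G.edgeFinset, P e)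
    (hFF : ∃ ψ : Fin N → ℂ, ψ ≠ 0 ∧ ∀ e ∈ G.edgeFinset, (P e).mulVec ψ = 0)
    (γloc : ℝ)
    (hγ : γloc = sInf {g : ℝ | ∃ e ∈ G.edgeFinset, ∃ e' ∈ G.edgeFinset,
      e ≠ e' ∧ (∃ v : V, v ∈ e ∧ v ∈ e') ∧ g = specGap (P e + P e')}) :
    (H * H - ((2 * ((δ : ℝ) - 1) * (γloc - (1 - 1 / (2 * ((δ : ℝ) - 1)))) : ℝ) : ℂ) • H).PosSemidef ∧
    2 * ((δ : ℝ) - 1) * (γloc - (1 - 1 / (2 * ((δ : ℝ) - 1)))) ≤ specGap H :=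
  stmt_15_general G δ hδ hreg P hproj hcomm H hH γloc hγ
end

section
/- Let W be the n×n symmetric simple random walk matrix on the cycle, W_{ij} = ½ if j ≡ i±1 (mod n) and 0 otherwise, and let γ₀ > 2γ₁ > 0. Then the positive square root of the circulant matrix γ₀·𝟙 + 2γ₁·W has entries satisfying |(√(γ₀𝟙 + 2γ₁W))_{ij}| ≤ (√γ₀ / (1 − 2γ₁/γ₀)) · (2γ₁/γ₀)^{d(i,j)}, where d(i,j) = min{|i−j|, n−|i−j|} is the cycle distance. -/
/-!
Write `γ₀𝟙 + 2γ₁W = γ₀(𝟙 + qW)` with `q = 2γ₁/γ₀ < 1`. By Gershgorin the eigenvalues of `qW` lie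
in `[-q, q]`, so the binomial series of `√(1 + x)` may be applied eigenvalue by eigenvalue:
`√(γ₀𝟙 + 2γ₁W) = √γ₀ ∑ₖ (1/2 choose k) qᵏ Wᵏ`. The coefficients have modulus at most `1`, the
entries of the stochastic matrix `Wᵏ` lie in `[0, 1]`, and `(Wᵏ)ᵢⱼ = 0` for `k < d(i, j)` because
`W` only links neighbours; what remains is a geometric series starting at `q ^ d(i, j)`.
-/

open Matrix

/-- Real power of a real symmetric matrix via the spectral decomposition
(junk value `0` if not symmetric). -/
noncomputable def mpowR {n : ℕ} (M : Matrix (Fin n) (Fin n) ℝ) (r : ℝ) :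
    Matrix (Fin n) (Fin n) ℝ :=
  if h : M.IsHermitian then
    (h.eigenvectorUnitary : Matrix (Fin n) (Fin n) ℝ) *
      Matrix.diagonal (fun i => (h.eigenvalues i ^ r : ℝ)) *
      (star (h.eigenvectorUnitary : Matrix (Fin n) (Fin n) ℝ))
  else 0

theorem Ring.choose_succ_right_eq {R : Type*} [Field R] [CharZero R] (a : R) (k : ℕ) :
    Ring.choose a (k + 1) = Ring.choose a k * ((a - k) / (k + 1)) := by
  rw [Ring.choose_eq_smul, Ring.choose_eq_smul, descPochhammer_succ_right]
  simp only [Polynomial.smeval_mul, Polynomial.smeval_sub, Polynomial.smeval_X,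
    Polynomial.smeval_natCast, Nat.factorial_succ, smul_eq_mul]
  push_cast
  field_simp
  ring

theorem Ring.abs_choose_le_one {a : ℝ} (ha : |a| ≤ 1) (k : ℕ) : |Ring.choose a k| ≤ 1 := by
  induction k with
  | zero => simp
  | succ k ih =>
    have hratio : |(a - k) / (k + 1)| ≤ 1 := by
      rw [abs_div, abs_of_pos (by positivity : (0 : ℝ) < k + 1), div_le_one (by positivity)]
      have := abs_le.1 ha
      exact abs_le.2 ⟨by linarith, by linarith [(Nat.cast_nonneg k : (0 : ℝ) ≤ k)]⟩
    rw [Ring.choose_succ_right_eq, abs_mul]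
    exact mul_le_one₀ ih (abs_nonneg _) hratio

theorem Real.hasSum_choose_mul_pow (a : ℝ) {x : ℝ} (hx : |x| < 1) :
    HasSum (fun k => Ring.choose a k * x ^ k) ((1 + x) ^ a) := by
  have := Real.one_add_rpow_hasFPowerSeriesOnBall_zero (a := a) |>.hasSum
    (y := x) (by rwa [mem_eball_zero_iff, Real.enorm_eq_ofReal_abs, ENNReal.ofReal_lt_one])
  simpa [binomialSeries, FormalMultilinearSeries.coeff_ofScalars, mul_comm] using this

theorem HasSum.abs_le_of_eq_zero_of_abs_le_geometric {f : ℕ → ℝ} {s C q : ℝ} {d : ℕ}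
    (hf : HasSum f s) (hq0 : 0 ≤ q) (hq1 : q < 1) (hzero : ∀ k < d, f k = 0)
    (hle : ∀ k, |f k| ≤ C * q ^ k) : |s| ≤ C / (1 - q) * q ^ d := by
  have htail : HasSum (fun k => f (k + d)) s := by
    simpa [Finset.sum_eq_zero fun k hk => hzero k (Finset.mem_range.1 hk)] using
      (hasSum_nat_add_iff' d).2 hf
  have hgeom : HasSum (fun k => C * q ^ d * q ^ k) (C * q ^ d * (1 - q)⁻¹) :=
    (hasSum_geometric_of_lt_one hq0 hq1).mul_left _
  have := htail.norm_le_of_bounded hgeom fun k => by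
    simpa [pow_add, mul_assoc, mul_comm, mul_left_comm] using hle (k + d)
  rw [Real.norm_eq_abs] at this
  linarith [show C * q ^ d * (1 - q)⁻¹ = C / (1 - q) * q ^ d by ring]

namespace Matrix

variable {m : Type*} [Fintype m] [DecidableEq m]

theorem hasSum_smul_pow_conj_diagonal {U : Matrix m m ℝ} (hU : U ∈ unitaryGroup m ℝ)
    {c : ℕ → ℝ} {d f : m → ℝ} (h : ∀ p, HasSum (fun k => c k * d p ^ k) (f p)) :
    HasSum (fun k => c k • (U * diagonal d * star U) ^ k) (U * diagonal f * star U) := by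
  have hdiag : HasSum (fun k => diagonal (c k • d ^ k)) (diagonal f) :=
    (Pi.hasSum.2 h).matrix_diagonal
  have hconj (k : ℕ) : (U * diagonal d * star U) ^ k = U * diagonal (d ^ k) * star U := by
    simpa [diagonal_pow] using (map_pow (Unitary.conjStarAlgAut ℝ _ ⟨U, hU⟩) (diagonal d) k).symm
  simpa [hconj, Matrix.mul_smul, Matrix.smul_mul, diagonal_smul] using
    (hdiag.mul_left U).mul_right (star U)

theorem abs_le_of_hasEigenvalue {B : Matrix m m ℝ} {μ r : ℝ}
    (hμ : Module.End.HasEigenvalue (toLin' B) μ) (hB : ∀ k, ∑ j, |B k j| ≤ r) : |μ| ≤ r := by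
  obtain ⟨k, hk⟩ := eigenvalue_mem_ball hμ
  rw [Metric.mem_closedBall, Real.dist_eq] at hk
  calc |μ| ≤ |μ - B k k| + |B k k| := by linarith [abs_sub_abs_le_abs_sub μ (B k k)]
    _ ≤ ∑ j ∈ Finset.univ.erase k, |B k j| + |B k k| := by gcongr; simpa using hk
    _ = ∑ j, |B k j| := Finset.sum_erase_add _ _ (Finset.mem_univ k)
    _ ≤ r := hB k

theorem IsHermitian.abs_eigenvalues_sub_le {B : Matrix m m ℝ} {c r : ℝ}
    (hM : (c • 1 + B).IsHermitian) (hB : ∀ k, ∑ j, |B k j| ≤ r) (p : m) :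
    |hM.eigenvalues p - c| ≤ r := by
  have hmem := hM.eigenvalues_mem_spectrum_real p
  rw [← sub_add_cancel (hM.eigenvalues p) c, spectrum.add_mem_iff,
    Algebra.algebraMap_eq_smul_one, neg_add_cancel_left, ← spectrum_toLin',
    ← Module.End.hasEigenvalue_iff_mem_spectrum] at hmem
  exact abs_le_of_hasEigenvalue hmem hB

theorem pow_apply_eq_zero_of_lt {α : Type*} [Semiring α] {A : Matrix m m α} {d : m → m → ℕ}
    (hd : ∀ i, d i i = 0) (hstep : ∀ i l j, A l j ≠ 0 → d i j ≤ d i l + 1)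
    {k : ℕ} {i j : m} (hk : k < d i j) : (A ^ k) i j = 0 := by
  induction k generalizing j with
  | zero =>
    have hij : i ≠ j := by rintro rfl; simp [hd] at hk
    simp [one_apply_ne hij]
  | succ k ih =>
    rw [pow_succ, mul_apply]
    refine Finset.sum_eq_zero fun l _ => ?_
    by_cases hA : A l j = 0
    · rw [hA, mul_zero]
    · rw [ih (by linarith [hstep i l j hA]), zero_mul]

end Matrix

theorem hasSum_mpowR_half {n : ℕ} {M : Matrix (Fin n) (Fin n) ℝ} (hM : M.IsHermitian)
    {c : ℝ} (hc : 0 < c) (heig : ∀ p, |hM.eigenvalues p - c| < c) :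
    HasSum (fun k => (√c * Ring.choose (1 / 2 : ℝ) k) • (c⁻¹ • M - 1) ^ k) (mpowR M (1 / 2)) := by
  set U : Matrix (Fin n) (Fin n) ℝ := (hM.eigenvectorUnitary : Matrix (Fin n) (Fin n) ℝ)
  have hspec : c⁻¹ • M - 1 = U * diagonal (fun p => hM.eigenvalues p / c - 1) * star U := by
    conv_lhs => rw [hM.spectral_theorem]
    have hdiag : diagonal (fun p => hM.eigenvalues p / c - 1) =
        c⁻¹ • diagonal hM.eigenvalues - 1 := by
      ext a b
      by_cases hab : a = b <;> simp [hab, div_eq_inv_mul]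
    simp [hdiag, Matrix.mul_sub, Matrix.sub_mul, U]
  rw [hspec, mpowR, dif_pos hM]
  refine hasSum_smul_pow_conj_diagonal (SetLike.coe_mem _) fun p => ?_
  have hx : |hM.eigenvalues p / c - 1| < 1 := by
    rw [show hM.eigenvalues p / c - 1 = (hM.eigenvalues p - c) / c by field_simp, abs_div,
      abs_of_pos hc, div_lt_one hc]
    exact heig p
  have hval : hM.eigenvalues p ^ (1 / 2 : ℝ) =
      √c * (1 + (hM.eigenvalues p / c - 1)) ^ (1 / 2 : ℝ) := by
    rw [Real.sqrt_eq_rpow, ← Real.mul_rpow hc.le (by linarith [(abs_lt.1 hx).1])]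
    congr 1
    field_simp
    ring
  rw [hval]
  simpa [mul_assoc] using (Real.hasSum_choose_mul_pow (1 / 2) hx).mul_left √c

namespace Fin

variable {n : ℕ}

def cycleDist (i j : Fin n) : ℕ := min (i - j).val (j - i).val

theorem cycleDist_self (i : Fin n) : cycleDist i i = 0 := by simp [cycleDist, sub_def]

theorem cycleDist_comm (i j : Fin n) : cycleDist i j = cycleDist j i := min_comm _ _

theorem add_one_ne_sub_one [NeZero n] (hn : 3 ≤ n) (i : Fin n) : i + 1 ≠ i - 1 := by
  intro h
  have h2 : (1 : Fin n) + 1 = 0 :=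
    add_left_cancel (a := i) (by rw [← add_assoc, h, sub_add_cancel, add_zero])
  have := congrArg val h2
  rw [val_add, val_one', val_zero, Nat.mod_eq_of_lt (by omega : 1 < n),
    Nat.mod_eq_of_lt (by omega : 1 + 1 < n)] at this
  omega

theorem min_val_add_one_le [NeZero n] (hn : 2 ≤ n) (a : Fin n) :
    min (a + 1).val (-(a + 1)).val ≤ min a.val (-a).val + 1 := by
  have h1 : (1 : Fin n).val = 1 := by rw [val_one']; exact Nat.mod_eq_of_lt (by omega)
  have ha := a.isLt
  rw [Fin.val_neg', Fin.val_neg', val_add, h1]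
  rcases Nat.lt_or_ge (a.val + 1) n with h | h
  · rw [Nat.mod_eq_of_lt h, Nat.mod_eq_of_lt (by omega : n - (a.val + 1) < n)]
    rcases Nat.eq_zero_or_pos a.val with h0 | h0
    · simp [h0]
    · rw [Nat.mod_eq_of_lt (by omega : n - a.val < n)]
      omega
  · rw [show a.val + 1 = n by omega, Nat.mod_self]
    omega

theorem cycleDist_add_one_le [NeZero n] (hn : 2 ≤ n) (i j : Fin n) :
    cycleDist i (j + 1) ≤ cycleDist i j + 1 := by
  rw [cycleDist_comm, cycleDist_comm i, cycleDist, cycleDist, ← neg_sub j i,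
    show i - (j + 1) = -(j - i + 1) by abel, add_sub_right_comm]
  exact min_val_add_one_le hn (j - i)

theorem cycleDist_sub_one_le [NeZero n] (hn : 2 ≤ n) (i j : Fin n) :
    cycleDist i (j - 1) ≤ cycleDist i j + 1 := by
  rw [cycleDist, cycleDist, ← neg_sub i j, show i - (j - 1) = i - j + 1 by abel,
    show j - 1 - i = -(i - j + 1) by abel]
  exact min_val_add_one_le hn (i - j)

end Fin

section CycleWalk

variable {n : ℕ} [NeZero n]

noncomputable def cycleWalk (n : ℕ) [NeZero n] : Matrix (Fin n) (Fin n) ℝ :=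
  of fun i j => if j = i + 1 ∨ j = i - 1 then 1 / 2 else 0

theorem cycleWalk_isHermitian : (cycleWalk n).IsHermitian := by
  ext i j
  have hsymm : (i = j + 1 ∨ i = j - 1) ↔ (j = i + 1 ∨ j = i - 1) := by
    rw [eq_sub_iff_add_eq, eq_sub_iff_add_eq, eq_comm (a := i), eq_comm (a := j)]
    exact or_comm
  simp only [conjTranspose_apply, star_trivial, cycleWalk, of_apply, hsymm]

theorem cycleWalk_mem_rowStochastic (hn : 3 ≤ n) : cycleWalk n ∈ rowStochastic ℝ (Fin n) := by
  rw [mem_rowStochastic_iff_sum]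
  refine ⟨fun i j => by simp only [cycleWalk, of_apply]; split <;> norm_num, fun i => ?_⟩
  simp [cycleWalk, Finset.sum_ite, Finset.filter_or, Finset.filter_eq',
    Fin.add_one_ne_sub_one hn i]

theorem Fin.cycleDist_le_of_cycleWalk_ne_zero (hn : 2 ≤ n) {i l j : Fin n}
    (h : cycleWalk n l j ≠ 0) : Fin.cycleDist i j ≤ Fin.cycleDist i l + 1 := by
  have hlj : j = l + 1 ∨ j = l - 1 := by
    by_contra hlj
    simp [cycleWalk, hlj] at h
  rcases hlj with rfl | rfl
  · exact Fin.cycleDist_add_one_le hn i l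
  · exact Fin.cycleDist_sub_one_le hn i l

end CycleWalk

theorem abs_mpowR_half_apply_le {n : ℕ} {A : Matrix (Fin n) (Fin n) ℝ} (hA : A.IsHermitian)
    (hst : A ∈ rowStochastic ℝ (Fin n)) {d : Fin n → Fin n → ℕ} (hd : ∀ i, d i i = 0)
    (hstep : ∀ i l j, A l j ≠ 0 → d i j ≤ d i l + 1) {b c : ℝ} (hb : 0 ≤ b) (hbc : b < c)
    (i j : Fin n) :
    |mpowR (c • 1 + b • A) (1 / 2) i j| ≤ √c / (1 - b / c) * (b / c) ^ d i j := by
  have hc : 0 < c := by linarith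
  have hq0 : 0 ≤ b / c := by positivity
  have hq1 : b / c < 1 := (div_lt_one hc).2 hbc
  have hM : (c • 1 + b • A).IsHermitian := (isHermitian_one.smul (.all c)).add (hA.smul (.all b))
  have heig (p : Fin n) : |hM.eigenvalues p - c| < c := by
    refine (hM.abs_eigenvalues_sub_le (fun k => ?_) p).trans_lt hbc
    simp [abs_of_nonneg, nonneg_of_mem_rowStochastic hst, hb, ← Finset.mul_sum,
      sum_row_of_mem_rowStochastic hst]
  have hseries := hasSum_mpowR_half hM hc heig
  rw [show c⁻¹ • (c • 1 + b • A) - 1 = (b / c) • A by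
    rw [smul_add, smul_smul, smul_smul, inv_mul_cancel₀ hc.ne', one_smul, add_sub_cancel_left,
      inv_mul_eq_div]] at hseries
  have hentry : HasSum (fun k => √c * Ring.choose (1 / 2 : ℝ) k * ((b / c) ^ k * (A ^ k) i j))
      (mpowR (c • 1 + b • A) (1 / 2) i j) := by
    simpa only [smul_pow, Matrix.smul_apply, smul_eq_mul] using
      Pi.hasSum.1 (Pi.hasSum.1 hseries i) j
  refine hentry.abs_le_of_eq_zero_of_abs_le_geometric hq0 hq1 (fun k hk => ?_) (fun k => ?_)
  · rw [pow_apply_eq_zero_of_lt hd hstep hk, mul_zero, mul_zero]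
  have hAk := pow_mem hst k
  have hAk_nonneg := nonneg_of_mem_rowStochastic hAk (i := i) (j := j)
  have hAk_le := le_one_of_mem_rowStochastic hAk (i := i) (j := j)
  have hchoose := Ring.abs_choose_le_one (by norm_num : |(1 / 2 : ℝ)| ≤ 1) k
  rw [abs_mul, abs_mul, abs_of_nonneg (Real.sqrt_nonneg c),
    abs_of_nonneg (mul_nonneg (pow_nonneg hq0 k) hAk_nonneg)]
  calc √c * |Ring.choose (1 / 2) k| * ((b / c) ^ k * (A ^ k) i j)
      ≤ √c * 1 * ((b / c) ^ k * 1) := by gcongr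
    _ = √c * (b / c) ^ k := by ring

/-- Exponential decay of the entries of the square root of the circulant matrix
`γ₀·𝟙 + 2γ₁·W`, where `W` is the symmetric simple random walk matrix on the `n`-cycle
and `γ₀ > 2γ₁ > 0`: the `(i,j)` entry is bounded by
`(√γ₀/(1 − 2γ₁/γ₀))·(2γ₁/γ₀)^{d(i,j)}` with `d` the cycle distance. -/
theorem stmt_17 {n : ℕ} [NeZero n] (hn : 3 ≤ n) (γ₀ γ₁ : ℝ)
    (hγ₁ : 0 < γ₁) (hγ₀ : 2 * γ₁ < γ₀)
    (W : Matrix (Fin n) (Fin n) ℝ)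
    (hW : W = Matrix.of fun i j => if j = i + 1 ∨ j = i - 1 then (1:ℝ)/2 else 0)
    (i j : Fin n) :
    |mpowR (γ₀ • (1 : Matrix (Fin n) (Fin n) ℝ) + (2 * γ₁) • W) (1/2) i j| ≤
      (Real.sqrt γ₀ / (1 - 2 * γ₁ / γ₀)) *
        (2 * γ₁ / γ₀) ^ (min ((i - j : Fin n).val) ((j - i : Fin n).val)) := by
  obtain rfl : W = cycleWalk n := hW
  exact abs_mpowR_half_apply_le cycleWalk_isHermitian (cycleWalk_mem_rowStochastic hn)
    Fin.cycleDist_self (fun _ _ _ => Fin.cycleDist_le_of_cycleWalk_ne_zero (by omega))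
    (by linarith) hγ₀ i j
end

section
/- Let σ be a positive definite state and L(ρ) = d_in(c†ρc − ½{cc†,ρ}) + d_out(cρc† − ½{c†c,ρ}) with d_in, d_out > 0, where c satisfies σcσ^{-1} = e^{ε}c with ε = −log(d_in/d_out) (so σc†σ^{-1} = e^{−ε}c†). Then for any s ∈ [0,1], the similarity-transformed superoperator H = −Γ_s^{-1/2}∘L∘Γ_s^{1/2} equals H(ρ) = −√(d_in·d_out)·(c†ρc + cρc†) + (d_in/2){cc†, ρ} + (d_out/2){c†c, ρ}; in particular H is self-adjoint with respect to the Hilbert–Schmidt inner product and independent of s. -/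
open Matrix
open scoped ComplexOrder

/-!
With `k = d_out / d_in = e^ε`, the relation `σ c = k c σ` says that, in an eigenbasis of `σ`,
`c` only connects eigenvalues in ratio `k`; hence `σ^t c σ^{-t} = k^t c`,
`σ^t c† σ^{-t} = k^{-t} c†`, and `cc†`, `c†c` commute with every `σ^t`. Conjugating `L` by the `Γ`'s therefore rescales its two
jump terms by `k^{±1/2}` and leaves the anticommutators unchanged, and
`d_in k^{1/2} = d_out k^{-1/2} = √(d_in d_out)`. Self-adjointness of `H` is cyclicity of the trace.
-/

lemma diagonal_rpow_mul_of_diagonal_mul {n : Type*} [Fintype n] [DecidableEq n]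
    {d : n → ℝ} (hd : ∀ i, 0 ≤ d i) {k : ℝ} (hk : 0 ≤ k) {X : Matrix n n ℂ}
    (hX : diagonal (fun i => (d i : ℂ)) * X = (k : ℂ) • (X * diagonal fun i => (d i : ℂ)))
    (t : ℝ) :
    diagonal (fun i => ((d i ^ t : ℝ) : ℂ)) * X =
      ((k ^ t : ℝ) : ℂ) • (X * diagonal fun i => ((d i ^ t : ℝ) : ℂ)) := by
  ext i j
  have hij := congrFun₂ hX i j
  simp only [diagonal_mul, mul_diagonal, Matrix.smul_apply, smul_eq_mul] at hij ⊢
  by_cases hXij : X i j = 0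
  · simp [hXij]
  have hdij : d i = k * d j := by
    have : (d i : ℂ) * X i j = (k * d j : ℝ) * X i j := by push_cast; linear_combination hij
    exact_mod_cast mul_right_cancel₀ hXij this
  rw [hdij, Real.mul_rpow hk (hd j)]
  push_cast
  ring

lemma mul_conjTranspose_eq_smul_of_mul_eq_smul {n : Type*} [Fintype n]
    {σ c : Matrix n n ℂ} (hσ : σ.IsHermitian) {k : ℝ} (hk : k ≠ 0)
    (hc : σ * c = (k : ℂ) • (c * σ)) :
    σ * cᴴ = ((k⁻¹ : ℝ) : ℂ) • (cᴴ * σ) := by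
  have hcH : cᴴ * σ = (k : ℂ) • (σ * cᴴ) := by
    simpa [hσ.eq] using congrArg conjTranspose hc
  rw [hcH, smul_smul, ← Complex.ofReal_mul, inv_mul_cancel₀ hk, Complex.ofReal_one, one_smul]

lemma mul_mul_eq_smul_of_mul_eq_smul {R A : Type*} [CommSemiring R] [Semiring A] [Algebra R A]
    {σ x y : A} {a b : R} (hx : σ * x = a • (x * σ)) (hy : σ * y = b • (y * σ)) :
    σ * (x * y) = (a * b) • (x * y * σ) := by
  rw [← mul_assoc, hx, smul_mul_assoc, mul_assoc, hy, mul_smul_comm, smul_smul, mul_assoc]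

section mpow

variable {N : ℕ} {σ : Matrix (Fin N) (Fin N) ℂ}

lemma mpow_eq_conjStarAlgAut (hσ : σ.IsHermitian) (t : ℝ) :
    mpow σ t = Unitary.conjStarAlgAut ℂ _ hσ.eigenvectorUnitary
      (diagonal fun i => ((hσ.eigenvalues i ^ t : ℝ) : ℂ)) := by
  rw [mpow, dif_pos hσ]
  rfl

lemma mpow_mul_mpow_neg (hσ : σ.PosDef) (t : ℝ) : mpow σ t * mpow σ (-t) = 1 := by
  rw [mpow_eq_conjStarAlgAut hσ.1, mpow_eq_conjStarAlgAut hσ.1, ← map_mul, diagonal_mul_diagonal,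
    ← map_one (Unitary.conjStarAlgAut ℂ _ hσ.1.eigenvectorUnitary), ← diagonal_one]
  congr 2
  ext i
  rw [← Complex.ofReal_mul, ← Real.rpow_add (hσ.eigenvalues_pos i), add_neg_cancel,
    Real.rpow_zero, Complex.ofReal_one]

lemma mpow_mul_of_mul_eq_smul (hσ : σ.PosSemidef) {k : ℝ} (hk : 0 ≤ k)
    {c : Matrix (Fin N) (Fin N) ℂ} (hc : σ * c = (k : ℂ) • (c * σ)) (t : ℝ) :
    mpow σ t * c = ((k ^ t : ℝ) : ℂ) • (c * mpow σ t) := by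
  set Φ := Unitary.conjStarAlgAut ℂ _ hσ.1.eigenvectorUnitary
  obtain ⟨c', rfl⟩ : ∃ c', Φ c' = c := ⟨Φ.symm c, Φ.apply_symm_apply c⟩
  have hΦ : Φ (diagonal (RCLike.ofReal ∘ hσ.1.eigenvalues)) * Φ c' =
      (k : ℂ) • (Φ c' * Φ (diagonal (RCLike.ofReal ∘ hσ.1.eigenvalues))) := by
    rw [← hσ.1.spectral_theorem]
    exact hc
  rw [← map_mul, ← map_mul, ← map_smul] at hΦ
  rw [mpow_eq_conjStarAlgAut hσ.1, ← map_mul, ← map_mul, ← map_smul,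
    diagonal_rpow_mul_of_diagonal_mul hσ.eigenvalues_nonneg hk (Φ.injective hΦ)]

lemma mpow_mul_mul_mpow_neg_of_mul_eq_smul (hσ : σ.PosDef) {k : ℝ} (hk : 0 ≤ k)
    {c : Matrix (Fin N) (Fin N) ℂ} (hc : σ * c = (k : ℂ) • (c * σ)) (t : ℝ) :
    mpow σ t * c * mpow σ (-t) = ((k ^ t : ℝ) : ℂ) • c := by
  rw [mpow_mul_of_mul_eq_smul hσ.posSemidef hk hc, smul_mul_assoc, mul_assoc,
    mpow_mul_mpow_neg hσ, mul_one]

end mpow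

section quadDissipator

variable {n : Type*} [Fintype n]

def quadDissipator (α β γ δ : ℂ) (c ρ : Matrix n n ℂ) : Matrix n n ℂ :=
  α • (cᴴ * ρ * c) + β • (c * ρ * cᴴ) + γ • (c * cᴴ * ρ + ρ * (c * cᴴ)) +
    δ • (cᴴ * c * ρ + ρ * (cᴴ * c))

lemma neg_quadDissipator (α β γ δ : ℂ) (c ρ : Matrix n n ℂ) :
    -quadDissipator α β γ δ c ρ = quadDissipator (-α) (-β) (-γ) (-δ) c ρ := by
  simp only [quadDissipator, neg_smul, neg_add]

lemma trace_conjTranspose_quadDissipator_mul (α γ δ : ℝ) (c A B : Matrix n n ℂ) :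
    trace ((quadDissipator α α γ δ c A)ᴴ * B) = trace (Aᴴ * quadDissipator α α γ δ c B) := by
  have sandwich : ∀ X Y : Matrix n n ℂ, trace ((X * A * Y)ᴴ * B) = trace (Aᴴ * (Xᴴ * B * Yᴴ)) := by
    intro X Y
    simp only [conjTranspose_mul, mul_assoc]
    rw [trace_mul_comm]
    simp only [mul_assoc]
  have herm_left : ∀ Y : Matrix n n ℂ, Y.IsHermitian →
      trace ((Y * A)ᴴ * B) = trace (Aᴴ * (Y * B)) := by
    intro Y hY
    rw [conjTranspose_mul, hY.eq, mul_assoc]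
  have herm_right : ∀ Y : Matrix n n ℂ, Y.IsHermitian →
      trace ((A * Y)ᴴ * B) = trace (Aᴴ * (B * Y)) := by
    intro Y hY
    rw [conjTranspose_mul, hY.eq, mul_assoc, trace_mul_comm, mul_assoc]
  have hccH := isHermitian_mul_conjTranspose_self c
  have hcHc := isHermitian_conjTranspose_mul_self c
  simp only [quadDissipator, conjTranspose_add, conjTranspose_smul, add_mul, mul_add,
    Matrix.smul_mul, Matrix.mul_smul, trace_add, trace_smul, sandwich, herm_left _ hccH,
    herm_left _ hcHc, herm_right _ hccH, herm_right _ hcHc, conjTranspose_conjTranspose,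
    Complex.star_def, Complex.conj_ofReal]
  abel

end quadDissipator

section conjugation

variable {N : ℕ} {σ c : Matrix (Fin N) (Fin N) ℂ}

lemma mpow_mul_quadDissipator_mul_mpow_neg (hσ : σ.PosDef) {k : ℝ} (hk : 0 < k)
    (hc : σ * c = (k : ℂ) • (c * σ)) (a b : ℝ) (α β γ δ : ℂ) (ρ : Matrix (Fin N) (Fin N) ℂ) :
    mpow σ a * quadDissipator α β γ δ c (mpow σ (-a) * ρ * mpow σ b) * mpow σ (-b) =
      quadDissipator ((k ^ (b - a) : ℝ) * α) ((k ^ (a - b) : ℝ) * β) γ δ c ρ := by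
  set Δ : ℝ → Matrix (Fin N) (Fin N) ℂ → Matrix (Fin N) (Fin N) ℂ :=
    fun t X => mpow σ t * X * mpow σ (-t) with hΔ
  have hcH := mul_conjTranspose_eq_smul_of_mul_eq_smul hσ.1 hk.ne' hc
  have hΔc : ∀ t, Δ t c = ((k ^ t : ℝ) : ℂ) • c :=
    mpow_mul_mul_mpow_neg_of_mul_eq_smul hσ hk.le hc
  have hΔcH : ∀ t, Δ t cᴴ = ((k ^ (-t) : ℝ) : ℂ) • cᴴ := fun t => by
    rw [Real.rpow_neg hk.le, ← Real.inv_rpow hk.le]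
    exact mpow_mul_mul_mpow_neg_of_mul_eq_smul hσ (inv_nonneg.2 hk.le) hcH t
  have hΔccH : ∀ t, Δ t (c * cᴴ) = c * cᴴ := fun t => by
    have := mul_mul_eq_smul_of_mul_eq_smul hc hcH
    rw [← Complex.ofReal_mul, mul_inv_cancel₀ hk.ne'] at this
    simpa using mpow_mul_mul_mpow_neg_of_mul_eq_smul hσ zero_le_one this t
  have hΔcHc : ∀ t, Δ t (cᴴ * c) = cᴴ * c := fun t => by
    have := mul_mul_eq_smul_of_mul_eq_smul hcH hc
    rw [← Complex.ofReal_mul, inv_mul_cancel₀ hk.ne'] at this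
    simpa using mpow_mul_mul_mpow_neg_of_mul_eq_smul hσ zero_le_one this t
  have hA : mpow σ a * mpow σ (-a) = 1 := mpow_mul_mpow_neg hσ a
  have hB : mpow σ b * mpow σ (-b) = 1 := mpow_mul_mpow_neg hσ b
  have conj_sandwich : ∀ X Y, mpow σ a * (X * (mpow σ (-a) * ρ * mpow σ b) * Y) * mpow σ (-b) =
      Δ a X * ρ * Δ b Y := by
    intro X Y
    simp only [hΔ, mul_assoc]
  have conj_left : ∀ X,
      mpow σ a * (X * (mpow σ (-a) * ρ * mpow σ b)) * mpow σ (-b) = Δ a X * ρ := by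
    intro X
    simp only [hΔ, mul_assoc, hB, mul_one]
  have conj_right : ∀ Y,
      mpow σ a * ((mpow σ (-a) * ρ * mpow σ b) * Y) * mpow σ (-b) = ρ * Δ b Y := by
    intro Y
    simp only [hΔ, ← mul_assoc, hA, one_mul]
  have hba : ((k ^ (b - a) : ℝ) : ℂ) = ((k ^ (-a) : ℝ) : ℂ) * ((k ^ b : ℝ) : ℂ) := by
    rw [← Complex.ofReal_mul, ← Real.rpow_add hk, neg_add_eq_sub]
  have hab : ((k ^ (a - b) : ℝ) : ℂ) = ((k ^ a : ℝ) : ℂ) * ((k ^ (-b) : ℝ) : ℂ) := by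
    rw [← Complex.ofReal_mul, ← Real.rpow_add hk, sub_eq_add_neg]
  simp only [quadDissipator, mul_add, add_mul, Matrix.mul_smul, Matrix.smul_mul, conj_sandwich,
    conj_left, conj_right, hΔc, hΔcH, hΔccH, hΔcHc, hba, hab]
  module

end conjugation

lemma div_rpow_half_mul_eq_sqrt {x y : ℝ} (hx : 0 < x) :
    (y / x) ^ (1 / 2 : ℝ) * x = √(x * y) := by
  rw [← Real.sqrt_eq_rpow, Real.sqrt_div' _ hx.le, Real.sqrt_mul hx.le]
  field_simp
  rw [Real.sq_sqrt hx.le]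

lemma div_rpow_neg_half_mul_eq_sqrt {x y : ℝ} (hx : 0 ≤ x) (hy : 0 < y) :
    (y / x) ^ (-(1 / 2) : ℝ) * y = √(x * y) := by
  rw [Real.rpow_neg (div_nonneg hy.le hx), ← Real.inv_rpow (div_nonneg hy.le hx), inv_div,
    div_rpow_half_mul_eq_sqrt hy, mul_comm]

/-- For the quadratic Lindbladian `L(ρ) = d_in(c†ρc − ½{cc†,ρ}) + d_out(cρc† − ½{c†c,ρ})`
with `σ c σ⁻¹ = e^ε c`, `ε = −log(d_in/d_out)`, the transformed superoperator
`H = −Γ_s^{-1/2} ∘ L ∘ Γ_s^{1/2}` equals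
`ρ ↦ −√(d_in d_out)(c†ρc + cρc†) + (d_in/2){cc†,ρ} + (d_out/2){c†c,ρ}` for every
`s ∈ [0,1]` (so it is independent of `s`), and it is self-adjoint with respect to the
Hilbert–Schmidt inner product. -/
theorem stmt_19 {N : ℕ} (σ : Matrix (Fin N) (Fin N) ℂ) (hσ : σ.PosDef)
    (din dout : ℝ) (hdin : 0 < din) (hdout : 0 < dout)
    (c : Matrix (Fin N) (Fin N) ℂ)
    (hc : σ * c * σ⁻¹ = ((Real.exp (-Real.log (din / dout)) : ℝ) : ℂ) • c)
    (L H : Matrix (Fin N) (Fin N) ℂ → Matrix (Fin N) (Fin N) ℂ)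
    (hL : ∀ ρ, L ρ =
      (din : ℂ) • (cᴴ * ρ * c - (1/2 : ℂ) • (c * cᴴ * ρ + ρ * c * cᴴ)) +
      (dout : ℂ) • (c * ρ * cᴴ - (1/2 : ℂ) • (cᴴ * c * ρ + ρ * cᴴ * c)))
    (hH : ∀ ρ, H ρ =
      -((Real.sqrt (din * dout) : ℝ) : ℂ) • (cᴴ * ρ * c + c * ρ * cᴴ) +
        ((din / 2 : ℝ) : ℂ) • (c * cᴴ * ρ + ρ * c * cᴴ) +
        ((dout / 2 : ℝ) : ℂ) • (cᴴ * c * ρ + ρ * cᴴ * c)) :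
    (∀ s ∈ Set.Icc (0:ℝ) 1, ∀ ρ,
      -(mpow σ (-(1 - s)/2) * L (mpow σ ((1 - s)/2) * ρ * mpow σ (s/2)) *
          mpow σ (-s/2)) = H ρ) ∧
    (∀ A B, Matrix.trace ((H A)ᴴ * B) = Matrix.trace (Aᴴ * H B)) := by
  have hσc : σ * c = ((dout / din : ℝ) : ℂ) • (c * σ) := by
    rw [← Matrix.nonsing_inv_mul_cancel_right σ (σ * c) hσ.det_pos.ne'.isUnit, hc, smul_mul_assoc,
      Real.exp_neg, Real.exp_log (div_pos hdin hdout), inv_div]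
  have hL' : ∀ ρ, L ρ = quadDissipator din dout (-din / 2) (-dout / 2) c ρ := fun ρ => by
    rw [hL, quadDissipator]
    simp only [mul_assoc]
    module
  have hH' : H = quadDissipator (-√(din * dout) : ℝ) (-√(din * dout) : ℝ) (din / 2 : ℝ)
      (dout / 2 : ℝ) c := funext fun ρ => by
    rw [hH, quadDissipator]
    simp only [mul_assoc]
    push_cast
    module
  refine ⟨fun s _ ρ => ?_, fun A B => by rw [hH']; exact trace_conjTranspose_quadDissipator_mul ..⟩
  rw [hL', hH', show (1 - s) / 2 = -(-(1 - s) / 2) by ring, show -s / 2 = -(s / 2) by ring,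
    mpow_mul_quadDissipator_mul_mpow_neg hσ (div_pos hdout hdin) hσc, neg_quadDissipator,
    show s / 2 - -(1 - s) / 2 = 1 / 2 by ring, show -(1 - s) / 2 - s / 2 = -(1 / 2) by ring,
    ← Complex.ofReal_mul, ← Complex.ofReal_mul, div_rpow_half_mul_eq_sqrt hdin,
    div_rpow_neg_half_mul_eq_sqrt hdin.le hdout]
  push_cast
  ring_nf
end
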